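/- arXiv:2401.11199 — 2 statements merged into one kernel-verified Lean document; each statement's English description precedes it below -/
import Mathlib

section
/- Under the assumptions of PDF projection, the pushforward of the projected density G(x) = (p₀(x)/p₀z(T(x))) g(T(x)) under T equals g. That is, for every measurable set A ⊆ ℝ^M, ∫_{T⁻¹(A)} G(x) dx = ∫_A g(z) dz. -/
/-!
Write `μ = p₀ · vol` and `ν = p₀z · vol`. The hypothesis on `p₀z` says `T₊μ = ν`, so integrating
`F ∘ T` against `μ` is integrating `F` against `ν`. With `F = 𝟙_A · g / p₀z` this turns the left
side into `∫_A p₀z · g / p₀z`, and `p₀z · (g / p₀z) = g` because `p₀z > 0` wherever `g ≠ 0`.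
-/

open MeasureTheory

section

variable {X Y : Type*} [MeasurableSpace X] [MeasurableSpace Y] {μ : Measure X} {ν : Measure Y}
  {T : X → Y} {p : X → ℝ} {q : Y → ℝ}

theorem integral_withDensity_ofReal_eq_integral_mul (hp : Measurable p) (hp0 : 0 ≤ᵐ[μ] p)
    (F : X → ℝ) :
    ∫ x, F x ∂μ.withDensity (fun x ↦ ENNReal.ofReal (p x)) = ∫ x, p x * F x ∂μ := by
  rw [integral_withDensity_eq_integral_toReal_smul hp.ennreal_ofReal
    (.of_forall fun _ ↦ ENNReal.ofReal_lt_top)]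
  refine integral_congr_ae ?_
  filter_upwards [hp0] with x hx
  rw [ENNReal.toReal_ofReal hx, smul_eq_mul]

theorem map_withDensity_ofReal_eq_of_setIntegral_preimage (hT : Measurable T)
    (hp : Integrable p μ) (hp0 : 0 ≤ᵐ[μ] p) (hq : Integrable q ν) (hq0 : 0 ≤ᵐ[ν] q)
    (h : ∀ A, MeasurableSet A → ∫ y in A, q y ∂ν = ∫ x in T ⁻¹' A, p x ∂μ) :
    (μ.withDensity fun x ↦ ENNReal.ofReal (p x)).map T =
      ν.withDensity fun y ↦ ENNReal.ofReal (q y) := by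
  ext A hA
  rw [Measure.map_apply hT hA, withDensity_apply _ (hT hA), withDensity_apply _ hA,
    ← ofReal_integral_eq_lintegral_ofReal hp.integrableOn (ae_restrict_of_ae hp0),
    ← ofReal_integral_eq_lintegral_ofReal hq.integrableOn (ae_restrict_of_ae hq0), h A hA]

theorem integral_mul_comp_eq_of_map_withDensity (hT : Measurable T) (hp : Measurable p)
    (hp0 : 0 ≤ᵐ[μ] p) (hq : Measurable q) (hq0 : 0 ≤ᵐ[ν] q)
    (hmap : (μ.withDensity fun x ↦ ENNReal.ofReal (p x)).map T =
      ν.withDensity fun y ↦ ENNReal.ofReal (q y))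
    {F : Y → ℝ} (hF : Measurable F) :
    ∫ x, p x * F (T x) ∂μ = ∫ y, q y * F y ∂ν := by
  rw [← integral_withDensity_ofReal_eq_integral_mul hp hp0,
    ← integral_map hT.aemeasurable hF.aestronglyMeasurable, hmap,
    integral_withDensity_ofReal_eq_integral_mul hq hq0]

end

theorem pdf_projection_pushforward_is_g_general
    (N M : ℕ)
    (T : (Fin N → ℝ) → (Fin M → ℝ)) (hT : Measurable T)
    (p₀ : (Fin N → ℝ) → ℝ) (p₀z : (Fin M → ℝ) → ℝ) (g : (Fin M → ℝ) → ℝ)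
    (hp₀_nonneg : ∀ x, 0 ≤ p₀ x) (hp₀_meas : Measurable p₀)
    (hp₀_int : ∫ x, p₀ x = 1)
    (hp₀z_meas : Measurable p₀z)
    (hpush : ∀ A : Set (Fin M → ℝ), MeasurableSet A →
      ∫ z in A, p₀z z = ∫ x in T ⁻¹' A, p₀ x)
    (hg_meas : Measurable g)
    (hp₀z_pos : ∀ z, g z ≠ 0 → 0 < p₀z z) :
    ∀ A : Set (Fin M → ℝ), MeasurableSet A →
      ∫ x in T ⁻¹' A, (p₀ x / p₀z (T x)) * g (T x) = ∫ z in A, g z := by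
  intro A hA
  have hp₀_integrable : Integrable p₀ := .of_integral_ne_zero (by simp [hp₀_int])
  have hp₀z_int : ∫ z, p₀z z = 1 := by simpa [hp₀_int] using hpush Set.univ .univ
  have hp₀z_integrable : Integrable p₀z := .of_integral_ne_zero (by simp [hp₀z_int])
  have hp₀_ae_nonneg : 0 ≤ᵐ[volume] p₀ := .of_forall hp₀_nonneg
  have hp₀z_ae_nonneg : 0 ≤ᵐ[volume] p₀z :=
    ae_nonneg_of_forall_setIntegral_nonneg hp₀z_integrable fun s hs _ ↦ by
      rw [hpush s hs]; exact setIntegral_nonneg (hT hs) fun x _ ↦ hp₀_nonneg x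
  have hmap := map_withDensity_ofReal_eq_of_setIntegral_preimage hT hp₀_integrable
    hp₀_ae_nonneg hp₀z_integrable hp₀z_ae_nonneg hpush
  set F := A.indicator fun z ↦ g z / p₀z z
  have hF : Measurable F := (hg_meas.div hp₀z_meas).indicator hA
  calc ∫ x in T ⁻¹' A, (p₀ x / p₀z (T x)) * g (T x)
      = ∫ x, p₀ x * F (T x) := by
        rw [← integral_indicator (hT hA)]
        congr 1 with x
        by_cases hx : T x ∈ A <;> simp [F, Set.indicator, hx, div_mul_eq_mul_div, mul_div_assoc]
    _ = ∫ z, p₀z z * F z :=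
        integral_mul_comp_eq_of_map_withDensity hT hp₀_meas hp₀_ae_nonneg hp₀z_meas
          hp₀z_ae_nonneg hmap hF
    _ = ∫ z in A, g z := by
        rw [← integral_indicator hA]
        congr 1 with z
        by_cases hz : z ∈ A
        · simpa [F, hz] using mul_div_cancel_of_imp' fun h ↦ by_contra fun hg ↦
            (hp₀z_pos z hg).ne' h
        · simp [F, hz]

/-- The pushforward under `T` of the projected density
`G(x) = p₀(x)/p₀z(T x) · g(T x)` equals `g`. -/
theorem pdf_projection_pushforward_is_g
    (N M : ℕ) (hMN : M < N)
    (T : (Fin N → ℝ) → (Fin M → ℝ)) (hT : Measurable T)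
    (p₀ : (Fin N → ℝ) → ℝ) (p₀z : (Fin M → ℝ) → ℝ) (g : (Fin M → ℝ) → ℝ)
    (hp₀_nonneg : ∀ x, 0 ≤ p₀ x) (hp₀_meas : Measurable p₀)
    (hp₀_int : ∫ x, p₀ x = 1)
    (hp₀z_meas : Measurable p₀z)
    (hpush : ∀ A : Set (Fin M → ℝ), MeasurableSet A →
      ∫ z in A, p₀z z = ∫ x in T ⁻¹' A, p₀ x)
    (hg_nonneg : ∀ z, 0 ≤ g z) (hg_meas : Measurable g)
    (hg_int : ∫ z, g z = 1)
    (hp₀z_pos : ∀ z, g z ≠ 0 → 0 < p₀z z) :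
    ∀ A : Set (Fin M → ℝ), MeasurableSet A →
      ∫ x in T ⁻¹' A, (p₀ x / p₀z (T x)) * g (T x) = ∫ z in A, g z :=
  pdf_projection_pushforward_is_g_general N M T hT p₀ p₀z g hp₀_nonneg hp₀_meas hp₀_int hp₀z_meas
    hpush hg_meas hp₀z_pos
end

section
/- Maximum likelihood fitting of the projected PDF decomposes the divergence: for fixed T and g, E_{x∼p}[log G(x)] = E_{x∼p}[log p(x)] − D(p ∥ p₀) + D(p_T ∥ p₀_T) − D(p_T ∥ g), where p_T and p₀_T are pushforwards of p and p₀ under T and G(x) = (p₀(x)/p₀_T(T(x))) g(T(x)). Consequently, maximizing the expected log-likelihood of G over (T, g) simultaneously maximizes the output divergence D(p_T ∥ p₀_T) and drives p_T toward g. -/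
open MeasureTheory

/-- KL divergence between densities: `D(p‖q) = ∫ p log(p/q)`. -/
noncomputable def klDivDens {n : ℕ} (p q : (Fin n → ℝ) → ℝ) : ℝ :=
  ∫ x, p x * Real.log (p x / q x)

/-!
Since `∫ p = 1`, the pushforward identity `∫_A pT = ∫_{T⁻¹ A} p` forces `pT` to be an integrable,
a.e. nonnegative density of the image of `p · dx` under `T`; hence `∫ p · (φ ∘ T) = ∫ pT · φ`,
and `p` vanishes a.e. on `T⁻¹ {pT = 0}`. Off that set the logarithms split:
`log G = log p - log (p / p₀) + log (g / p₀T) ∘ T`, and transporting the last term to the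
feature space, `pT log (g / p₀T) = pT log (pT / p₀T) - pT log (pT / g)`.
-/

namespace MeasureTheory

variable {α β E : Type*} [MeasurableSpace α] [MeasurableSpace β]
  [NormedAddCommGroup E] [NormedSpace ℝ E] {μ : Measure α} {ν : Measure β}
  {T : α → β} {f : α → ℝ} {g : β → ℝ}

theorem integrable_withDensity_ofReal_iff (hf : AEMeasurable f μ) (hf0 : 0 ≤ᵐ[μ] f)
    {φ : α → E} :
    Integrable φ (μ.withDensity fun x => ENNReal.ofReal (f x)) ↔
      Integrable (fun x => f x • φ x) μ := by
  refine (integrable_withDensity_iff_integrable_smul₀ hf.real_toNNReal).trans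
    (integrable_congr ?_)
  filter_upwards [hf0] with x hx
  rw [NNReal.smul_def, Real.coe_toNNReal _ hx]

theorem integral_withDensity_ofReal (hf : AEMeasurable f μ) (hf0 : 0 ≤ᵐ[μ] f) (φ : α → E) :
    ∫ x, φ x ∂μ.withDensity (fun x => ENNReal.ofReal (f x)) = ∫ x, f x • φ x ∂μ := by
  refine (integral_withDensity_eq_integral_smul₀ hf.real_toNNReal φ).trans
    (integral_congr_ae ?_)
  filter_upwards [hf0] with x hx
  rw [NNReal.smul_def, Real.coe_toNNReal _ hx]

theorem ae_nonneg_of_setIntegral_eq_setIntegral_preimage (hg : Integrable g ν)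
    (hf0 : 0 ≤ᵐ[μ] f)
    (h : ∀ A, MeasurableSet A → ∫ z in A, g z ∂ν = ∫ x in T ⁻¹' A, f x ∂μ) :
    0 ≤ᵐ[ν] g :=
  ae_nonneg_of_forall_setIntegral_nonneg hg fun A hA _ =>
    (h A hA).symm ▸ setIntegral_nonneg_of_ae_restrict (ae_restrict_of_ae hf0)

theorem map_withDensity_ofReal_eq_of_setIntegral_eq (hT : Measurable T)
    (hf : Integrable f μ) (hf0 : 0 ≤ᵐ[μ] f) (hg : Integrable g ν)
    (h : ∀ A, MeasurableSet A → ∫ z in A, g z ∂ν = ∫ x in T ⁻¹' A, f x ∂μ) :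
    (μ.withDensity fun x => ENNReal.ofReal (f x)).map T =
      ν.withDensity fun z => ENNReal.ofReal (g z) := by
  ext A hA
  rw [Measure.map_apply hT hA, withDensity_apply _ (hT hA), withDensity_apply _ hA,
    ← ofReal_integral_eq_lintegral_ofReal hf.integrableOn (ae_restrict_of_ae hf0),
    ← ofReal_integral_eq_lintegral_ofReal hg.integrableOn
      (ae_restrict_of_ae (ae_nonneg_of_setIntegral_eq_setIntegral_preimage hg hf0 h)),
    h A hA]

theorem integrable_smul_comp_iff_of_setIntegral_eq (hT : Measurable T)
    (hf : Integrable f μ) (hf0 : 0 ≤ᵐ[μ] f) (hg : Integrable g ν)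
    (h : ∀ A, MeasurableSet A → ∫ z in A, g z ∂ν = ∫ x in T ⁻¹' A, f x ∂μ)
    {φ : β → E} (hφ : AEStronglyMeasurable φ ν) :
    Integrable (fun x => f x • φ (T x)) μ ↔ Integrable (fun z => g z • φ z) ν := by
  have hmap := map_withDensity_ofReal_eq_of_setIntegral_eq hT hf hf0 hg h
  have hφ' : AEStronglyMeasurable φ ((μ.withDensity fun x => ENNReal.ofReal (f x)).map T) :=
    hmap ▸ hφ.mono_ac (withDensity_absolutelyContinuous _ _)
  rw [← integrable_withDensity_ofReal_iff hf.aemeasurable hf0, ← Function.comp_def,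
    ← integrable_map_measure hφ' hT.aemeasurable, hmap,
    integrable_withDensity_ofReal_iff hg.aemeasurable
      (ae_nonneg_of_setIntegral_eq_setIntegral_preimage hg hf0 h)]

theorem integral_smul_comp_eq_of_setIntegral_eq (hT : Measurable T)
    (hf : Integrable f μ) (hf0 : 0 ≤ᵐ[μ] f) (hg : Integrable g ν)
    (h : ∀ A, MeasurableSet A → ∫ z in A, g z ∂ν = ∫ x in T ⁻¹' A, f x ∂μ)
    {φ : β → E} (hφ : AEStronglyMeasurable φ ν) :
    ∫ x, f x • φ (T x) ∂μ = ∫ z, g z • φ z ∂ν := by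
  have hmap := map_withDensity_ofReal_eq_of_setIntegral_eq hT hf hf0 hg h
  have hφ' : AEStronglyMeasurable φ ((μ.withDensity fun x => ENNReal.ofReal (f x)).map T) :=
    hmap ▸ hφ.mono_ac (withDensity_absolutelyContinuous _ _)
  rw [← integral_withDensity_ofReal hf.aemeasurable hf0, ← integral_map hT.aemeasurable hφ',
    hmap, integral_withDensity_ofReal hg.aemeasurable
      (ae_nonneg_of_setIntegral_eq_setIntegral_preimage hg hf0 h)]

theorem ae_ne_zero_comp_of_setIntegral_eq (hg : Measurable g)
    (hf : Integrable f μ) (hf0 : 0 ≤ᵐ[μ] f)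
    (h : ∀ A, MeasurableSet A → ∫ z in A, g z ∂ν = ∫ x in T ⁻¹' A, f x ∂μ) :
    ∀ᵐ x ∂μ, f x ≠ 0 → g (T x) ≠ 0 := by
  have hZ : MeasurableSet {z | g z = 0} := hg (measurableSet_singleton 0)
  have hzero : ∫ x in T ⁻¹' {z | g z = 0}, f x ∂μ = 0 := by
    rw [← h _ hZ, setIntegral_congr_fun hZ fun z hz => hz, integral_zero]
  have hf_vanish := (setIntegral_eq_zero_iff_of_nonneg_ae (ae_restrict_of_ae hf0)
    hf.integrableOn).mp hzero
  filter_upwards [ae_imp_of_ae_restrict hf_vanish] with x hx hfx hgx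
  exact hfx (hx hgx)

end MeasureTheory

namespace Real

theorem mul_log_div_eq_mul_log_div_sub_mul_log_div {a b c : ℝ}
    (h : a ≠ 0 → b ≠ 0 ∧ c ≠ 0) :
    a * log (c / b) = a * log (a / b) - a * log (a / c) := by
  rcases eq_or_ne a 0 with rfl | ha
  · simp
  obtain ⟨hb, hc⟩ := h ha
  rw [log_div hc hb, log_div ha hb, log_div ha hc]
  ring

theorem mul_log_div_mul_eq_mul_log_sub_mul_log_div_add {a b c d : ℝ}
    (h : a ≠ 0 → b ≠ 0 ∧ c ≠ 0 ∧ d ≠ 0) :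
    a * log (b / c * d) = a * log a - a * log (a / b) + a * log (d / c) := by
  rcases eq_or_ne a 0 with rfl | ha
  · simp
  obtain ⟨hb, hc, hd⟩ := h ha
  rw [log_mul (div_ne_zero hb hc) hd, log_div hb hc, log_div ha hb, log_div hd hc]
  ring

end Real

open Real

theorem projected_pdf_loglik_decomposition_general
    (N M : ℕ)
    (T : (Fin N → ℝ) → (Fin M → ℝ)) (hT : Measurable T)
    (p p₀ : (Fin N → ℝ) → ℝ) (pT p₀T g : (Fin M → ℝ) → ℝ)
    (hp_nonneg : ∀ x, 0 ≤ p x) (hp_int : ∫ x, p x = 1)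
    (hg_meas : Measurable g)
    (hpT_meas : Measurable pT) (hp₀T_meas : Measurable p₀T)
    -- pT and p₀T are the pushforward densities of p and p₀ under T
    (hpushp : ∀ A : Set (Fin M → ℝ), MeasurableSet A →
      ∫ z in A, pT z = ∫ x in T ⁻¹' A, p x)
    -- positivity where needed
    (hp_pos : ∀ x, p x ≠ 0 → 0 < p₀ x)
    (hpT_pos : ∀ z, pT z ≠ 0 → 0 < p₀T z ∧ 0 < g z)
    -- all divergences and expectations are finite (integrability)
    (h2 : Integrable fun x => p x * Real.log (p x))
    (h3 : Integrable fun x => p x * Real.log (p x / p₀ x))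
    (h4 : Integrable fun z => pT z * Real.log (pT z / p₀T z))
    (h5 : Integrable fun z => pT z * Real.log (pT z / g z)) :
    ∫ x, p x * Real.log ((p₀ x / p₀T (T x)) * g (T x)) =
      (∫ x, p x * Real.log (p x)) - klDivDens p p₀ +
        klDivDens pT p₀T - klDivDens pT g := by
  have hp : Integrable p := .of_integral_ne_zero (by simp [hp_int])
  have hpT : Integrable pT := .of_integral_ne_zero <| by
    rw [← setIntegral_univ, hpushp _ .univ, Set.preimage_univ, setIntegral_univ, hp_int]
    exact one_ne_zero
  have hp0 : 0 ≤ᵐ[volume] p := ae_of_all _ hp_nonneg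
  have hφ : AEStronglyMeasurable (fun z => log (g z / p₀T z)) volume :=
    (measurable_log.comp (hg_meas.div hp₀T_meas)).aestronglyMeasurable
  have hlog_ratio (z) : pT z * log (g z / p₀T z) =
      pT z * log (pT z / p₀T z) - pT z * log (pT z / g z) :=
    mul_log_div_eq_mul_log_div_sub_mul_log_div fun hz =>
      ⟨(hpT_pos z hz).1.ne', (hpT_pos z hz).2.ne'⟩
  have hψ : Integrable fun x => p x * log (g (T x) / p₀T (T x)) :=
    (integrable_smul_comp_iff_of_setIntegral_eq hT hp hp0 hpT hpushp hφ).mpr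
      ((h4.sub h5).congr (ae_of_all _ fun z => (hlog_ratio z).symm))
  have hsplit : (fun x => p x * log (p₀ x / p₀T (T x) * g (T x))) =ᵐ[volume]
      fun x => (p x * log (p x) - p x * log (p x / p₀ x)) +
        p x * log (g (T x) / p₀T (T x)) := by
    filter_upwards [ae_ne_zero_comp_of_setIntegral_eq hpT_meas hp hp0 hpushp] with x hx
    refine mul_log_div_mul_eq_mul_log_sub_mul_log_div_add fun hpx => ?_
    obtain ⟨h₀T, hgT⟩ := hpT_pos (T x) (hx hpx)
    exact ⟨(hp_pos x hpx).ne', h₀T.ne', hgT.ne'⟩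
  have hchange : ∫ x, p x * log (g (T x) / p₀T (T x)) = ∫ z, pT z * log (g z / p₀T z) :=
    integral_smul_comp_eq_of_setIntegral_eq hT hp hp0 hpT hpushp hφ
  have h23 : Integrable fun x => p x * log (p x) - p x * log (p x / p₀ x) := h2.sub h3
  rw [integral_congr_ae hsplit, integral_add h23 hψ, integral_sub h2 h3, hchange,
    integral_congr_ae (ae_of_all _ hlog_ratio), integral_sub h4 h5]
  simp only [klDivDens]
  ring

/-- Decomposition of the expected log-likelihood of the projected PDF
`G(x) = (p₀(x)/p₀T(T x)) g(T x)`: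
`E_p[log G] = E_p[log p] − D(p‖p₀) + D(pT‖p₀T) − D(pT‖g)`. -/
theorem projected_pdf_loglik_decomposition
    (N M : ℕ)
    (T : (Fin N → ℝ) → (Fin M → ℝ)) (hT : Measurable T)
    (p p₀ : (Fin N → ℝ) → ℝ) (pT p₀T g : (Fin M → ℝ) → ℝ)
    (hp_nonneg : ∀ x, 0 ≤ p x) (hp_meas : Measurable p) (hp_int : ∫ x, p x = 1)
    (hp₀_nonneg : ∀ x, 0 ≤ p₀ x) (hp₀_meas : Measurable p₀) (hp₀_int : ∫ x, p₀ x = 1)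
    (hg_nonneg : ∀ z, 0 ≤ g z) (hg_meas : Measurable g) (hg_int : ∫ z, g z = 1)
    (hpT_meas : Measurable pT) (hp₀T_meas : Measurable p₀T)
    -- pT and p₀T are the pushforward densities of p and p₀ under T
    (hpushp : ∀ A : Set (Fin M → ℝ), MeasurableSet A →
      ∫ z in A, pT z = ∫ x in T ⁻¹' A, p x)
    (hpushp₀ : ∀ A : Set (Fin M → ℝ), MeasurableSet A →
      ∫ z in A, p₀T z = ∫ x in T ⁻¹' A, p₀ x)
    -- positivity where needed
    (hp_pos : ∀ x, p x ≠ 0 → 0 < p₀ x)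
    (hpT_pos : ∀ z, pT z ≠ 0 → 0 < p₀T z ∧ 0 < g z)
    -- all divergences and expectations are finite (integrability)
    (h1 : Integrable fun x => p x * Real.log ((p₀ x / p₀T (T x)) * g (T x)))
    (h2 : Integrable fun x => p x * Real.log (p x))
    (h3 : Integrable fun x => p x * Real.log (p x / p₀ x))
    (h4 : Integrable fun z => pT z * Real.log (pT z / p₀T z))
    (h5 : Integrable fun z => pT z * Real.log (pT z / g z)) :
    ∫ x, p x * Real.log ((p₀ x / p₀T (T x)) * g (T x)) =
      (∫ x, p x * Real.log (p x)) - klDivDens p p₀ +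
        klDivDens pT p₀T - klDivDens pT g :=
  projected_pdf_loglik_decomposition_general N M T hT p p₀ pT p₀T g hp_nonneg hp_int hg_meas
    hpT_meas hp₀T_meas hpushp hp_pos hpT_pos h2 h3 h4 h5
end
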